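/- For partitions λ, μ, the set {α : α is a distinct permutation of μ and λ/α is a generalized vertical strip, i.e., λ_i − α_i ∈ {0,1} for all i} is non-empty if and only if λ/μ is a vertical strip, and in that case its cardinality equals the product over i ≥ 1 of binomial(λ'_i − λ'_{i+1}, λ'_i − μ'_i). -/

import Mathlib

open Finset

/-- The conjugate partition: `conjPart l i = #{j : l j ≥ i}` (so `conjPart l i` is `l'_i`). -/
def conjPart {k : ℕ} (l : Fin k → ℕ) (i : ℕ) : ℕ :=
  (Finset.univ.filter fun j => i ≤ l j).card

/-- The set of distinct permutations `α` of `μ` such that `λ/α` is a generalized vertical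
strip, i.e. `λ i − α i ∈ {0,1}` for all `i`. -/
def permsVStrip {k : ℕ} (l m : Fin k → ℕ) : Set (Fin k → ℕ) :=
  {a | (∃ w : Equiv.Perm (Fin k), a = m ∘ w) ∧ ∀ i, a i ≤ l i ∧ l i ≤ a i + 1}

/-!
Two tuples are rearrangements of each other exactly when their conjugates agree. If
`a ≤ λ ≤ a + 1`, then `a` is determined by the set `R` of rows with `a_i = λ_i - 1`, and
`a'_t = λ'_t - #{i ∈ R | λ_i = t}`. Hence `a` is a rearrangement of `μ` iff `R` meets each block
`{i | λ_i = t}`, of size `λ'_t - λ'_{t+1}`, in exactly `λ'_t - μ'_t` rows, and these choices are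
independent, which gives the product of binomials. For non-emptiness, `a' = μ'` turns
`a ≤ λ ≤ a + 1` into `μ'_t ≤ λ'_t` and `λ'_{t+1} ≤ μ'_t`, which for partitions is equivalent to
`μ ≤ λ ≤ μ + 1`.
-/

section FiberCount

variable {ι : Type*} [Fintype ι]

theorem exists_perm_eq_comp_of_card_fiber_eq {α : Type*} [DecidableEq α] {a m : ι → α}
    (h : ∀ v, #{i | a i = v} = #{i | m i = v}) : ∃ w : Equiv.Perm ι, a = m ∘ w := by
  have e : ∀ v, {i // a i = v} ≃ {i // m i = v} := fun v =>
    Fintype.equivOfCardEq (by simpa only [Fintype.card_subtype] using h v)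
  exact ⟨Equiv.ofFiberEquiv e, funext fun i => (Equiv.ofFiberEquiv_map e i).symm⟩

theorem ncard_setOf_card_fiber_eq {β : Type*} [DecidableEq ι] [DecidableEq β] (f : ι → β)
    (n : β → ℕ) (s : Finset β) (hf : ∀ i, f i ∈ s) (hn : ∀ b ∉ s, n b = 0) :
    {R : Finset ι | ∀ b, #{i ∈ R | f i = b} = n b}.ncard =
      ∏ b ∈ s, (#{i | f i = b}).choose (n b) := by
  simp_rw [← card_powersetCard]
  rw [← card_pi, ← Set.ncard_coe_finset]
  refine Set.ncard_congr (fun R _ b _ => {i ∈ R | f i = b}) ?_ ?_ ?_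
  · intro R hR
    simp only [mem_coe, mem_pi, mem_powersetCard]
    exact fun b _ => ⟨fun i hi => by simp_all, hR b⟩
  · intro R R' _ _ h
    ext i
    simpa using congrArg (i ∈ ·) (congrFun₂ h (f i) (hf i))
  · intro g hg
    simp only [mem_coe, mem_pi, mem_powersetCard, subset_iff, mem_filter, mem_univ, true_and] at hg
    have hfilter : ∀ b hb, ({i | i ∈ g (f i) (hf i) ∧ f i = b} : Finset ι) = g b hb := by
      intro b hb
      ext i
      simp only [mem_filter, mem_univ, true_and]
      constructor
      · rintro ⟨hi, rfl⟩
        exact hi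
      · intro hi
        obtain rfl := (hg b hb).1 hi
        exact ⟨hi, rfl⟩
    refine ⟨({i | i ∈ g (f i) (hf i)} : Finset ι), fun b => ?_, funext₂ fun b hb => ?_⟩
    · by_cases hb : b ∈ s
      · rw [filter_filter, hfilter b hb, (hg b hb).2]
      · rw [hn b hb, card_eq_zero, filter_eq_empty_iff]
        exact fun i _ hi => hb (hi ▸ hf i)
    · rw [filter_filter, hfilter b hb]

end FiberCount

section ConjugatePartition

variable {k : ℕ}

theorem conjPart_zero (f : Fin k → ℕ) : conjPart f 0 = k := by
  simp [conjPart]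

theorem conjPart_eq_zero {f : Fin k → ℕ} {t : ℕ} (h : ∀ i, f i < t) : conjPart f t = 0 := by
  simpa [conjPart] using h

theorem conjPart_eq_conjPart_succ_add (f : Fin k → ℕ) (t : ℕ) :
    conjPart f t = conjPart f (t + 1) + #{i | f i = t} := by
  rw [conjPart, conjPart, ← card_union_of_disjoint (disjoint_filter.2 fun i _ _ => by omega)]
  congr 1
  ext i
  simp only [mem_filter, mem_union, mem_univ, true_and]
  omega

theorem exists_perm_iff_conjPart_eq (a m : Fin k → ℕ) :
    (∃ w : Equiv.Perm (Fin k), a = m ∘ w) ↔ ∀ t, conjPart a t = conjPart m t := by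
  refine ⟨?_, fun h => exists_perm_eq_comp_of_card_fiber_eq fun v => ?_⟩
  · rintro ⟨w, rfl⟩ t
    exact card_equiv w (by simp)
  · have ha := conjPart_eq_conjPart_succ_add a v
    have hm := conjPart_eq_conjPart_succ_add m v
    have := h v
    have := h (v + 1)
    omega

theorem conjPart_add_le_of_le_add {a l : Fin k → ℕ} {s : ℕ} (h : ∀ i, l i ≤ a i + s)
    (t : ℕ) : conjPart l (t + s) ≤ conjPart a t :=
  card_le_card fun i => by
    simp only [mem_filter, mem_univ, true_and]
    have := h i
    omega

theorem le_add_of_conjPart_add_le {a l : Fin k → ℕ} {s : ℕ} (ha : Antitone a)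
    (hl : Antitone l) (h : ∀ t, conjPart l (t + s) ≤ conjPart a t) (i : Fin k) : l i ≤ a i + s := by
  by_contra! hlt
  have hi : (i : ℕ) < conjPart l (l i) := Tuple.lt_card_ge_iff_apply_ge_of_antitone hl |>.2 le_rfl
  have := h (l i - s)
  rw [Nat.sub_add_cancel (by omega)] at this
  have := (Tuple.lt_card_ge_iff_apply_ge_of_antitone ha).1 (hi.trans_le this)
  omega

theorem conjPart_add_card_filter_lt {a l : Fin k → ℕ} (h : ∀ i, a i ≤ l i ∧ l i ≤ a i + 1)
    (t : ℕ) : conjPart a t + #{i | a i < l i ∧ l i = t} = conjPart l t := by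
  rw [conjPart, conjPart, ← card_union_of_disjoint (disjoint_filter.2 fun i _ _ => by omega)]
  congr 1
  ext i
  simp only [mem_filter, mem_union, mem_univ, true_and]
  have := h i
  omega

end ConjugatePartition

section VerticalStrip

variable {k : ℕ}

theorem ncard_permsVStrip {l m : Fin k → ℕ} (hml : m ≤ l) :
    (permsVStrip l m).ncard =
      {R : Finset (Fin k) | ∀ t, #{i ∈ R | l i = t} = conjPart l t - conjPart m t}.ncard := by
  have hconj : ∀ t, conjPart m t ≤ conjPart l t :=
    conjPart_add_le_of_le_add (s := 0) hml
  refine Set.ncard_congr (fun a _ => ({i | a i < l i} : Finset (Fin k))) ?_ ?_ ?_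
  · rintro a ⟨hperm, hstrip⟩ t
    rw [filter_filter, ← conjPart_add_card_filter_lt hstrip t,
      (exists_perm_iff_conjPart_eq a m).1 hperm t]
    omega
  · intro a b ⟨_, ha⟩ ⟨_, hb⟩ hab
    funext i
    have := congrArg (i ∈ ·) hab
    simp only [mem_filter, mem_univ, true_and, eq_iff_iff] at this
    have := ha i
    have := hb i
    omega
  · intro R hR
    have hR0 : ∀ i ∈ R, l i ≠ 0 := by
      intro i hi hi0
      have := hR 0
      rw [conjPart_zero, conjPart_zero, Nat.sub_self, card_eq_zero, filter_eq_empty_iff] at this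
      exact this hi hi0
    set a : Fin k → ℕ := fun i => if i ∈ R then l i - 1 else l i
    have hstrip : ∀ i, a i ≤ l i ∧ l i ≤ a i + 1 := fun i => by
      simp only [a]
      split_ifs <;> omega
    have hRa : ({i | a i < l i} : Finset (Fin k)) = R := by
      ext i
      simp only [mem_filter, mem_univ, true_and, a]
      split_ifs with hi
      · simpa [hi] using Nat.pos_of_ne_zero (hR0 i hi)
      · simpa using hi
    refine ⟨a, ⟨(exists_perm_iff_conjPart_eq a m).2 fun t => ?_, hstrip⟩, hRa⟩
    have := conjPart_add_card_filter_lt hstrip t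
    rw [← filter_filter, hRa, hR t] at this
    have := hconj t
    omega

theorem prod_range_choose_eq_finprod {l : Fin k → ℕ} (m : Fin k → ℕ) {N : ℕ}
    (hN : ∀ i, l i ≤ N) :
    ∏ t ∈ range (N + 1), (#{i | l i = t}).choose (conjPart l t - conjPart m t) =
      ∏ᶠ i : ℕ, (conjPart l (i + 1) - conjPart l (i + 2)).choose
        (conjPart l (i + 1) - conjPart m (i + 1)) := by
  have hvanish : ∀ t, N < t → conjPart l t = 0 := fun t ht =>
    conjPart_eq_zero fun i => (hN i).trans_lt ht
  rw [prod_range_succ', conjPart_zero, conjPart_zero, Nat.sub_self, Nat.choose_zero_right,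
    mul_one, finprod_eq_prod_of_mulSupport_subset]
  · refine prod_congr rfl fun t _ => ?_
    rw [conjPart_eq_conjPart_succ_add l (t + 1)]
    simp
  · intro t ht
    by_contra hmem
    simp only [coe_range, Set.mem_Iio, not_lt] at hmem
    simp [hvanish (t + 1) (by omega), hvanish (t + 2) (by omega)] at ht

end VerticalStrip

/-- the set is non-empty iff `λ/μ` is a vertical strip, and in that case its
cardinality is `∏_{i ≥ 1} binom (λ'_i − λ'_{i+1}) (λ'_i − μ'_i)`. -/
theorem stmt1 {k : ℕ} (l m : Fin k → ℕ) (hl : Antitone l) (hm : Antitone m) :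
    ((permsVStrip l m).Nonempty ↔ ∀ i, m i ≤ l i ∧ l i ≤ m i + 1) ∧
    ((∀ i, m i ≤ l i ∧ l i ≤ m i + 1) →
      (permsVStrip l m).ncard =
        ∏ᶠ i : ℕ, Nat.choose (conjPart l (i + 1) - conjPart l (i + 2))
          (conjPart l (i + 1) - conjPart m (i + 1))) := by
  refine ⟨⟨?_, fun h => ⟨m, ⟨1, rfl⟩, h⟩⟩, fun h => ?_⟩
  · rintro ⟨a, hperm, hstrip⟩ i
    have hconj := (exists_perm_iff_conjPart_eq a m).1 hperm
    have hal : ∀ t, conjPart a (t + 0) ≤ conjPart l t :=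
      conjPart_add_le_of_le_add fun i => (hstrip i).1
    have hla : ∀ t, conjPart l (t + 1) ≤ conjPart a t :=
      conjPart_add_le_of_le_add fun i => (hstrip i).2
    simp only [hconj] at hal hla
    exact ⟨le_add_of_conjPart_add_le hl hm hal i, le_add_of_conjPart_add_le hm hl hla i⟩
  · have hml : m ≤ l := fun i => (h i).1
    set N := univ.sup l
    have hN : ∀ i, l i ≤ N := fun i => le_sup (mem_univ i)
    rw [ncard_permsVStrip hml, ncard_setOf_card_fiber_eq l _ (range (N + 1))
      (fun i => mem_range.2 (Nat.lt_succ_of_le (hN i))), prod_range_choose_eq_finprod m hN]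
    intro t ht
    rw [conjPart_eq_zero fun i => (hN i).trans_lt (by simpa using ht), zero_tsub]
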